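/- arXiv:2108.09421 — 6 statements merged into one kernel-verified Lean document; each statement's English description precedes it below -/
import Mathlib

section
/- For every natural number n and real ν with ν + 2k ≠ 0 for all 0 ≤ k ≤ n, one has ∑_{j=0}^{n} C(2j,j) · C(ν+2(n-j), n-j) · ν/(ν+2(n-j)) = C(ν+2n, n), where C(x,k) denotes the generalized binomial coefficient x(x-1)⋯(x-k+1)/k!. -/
/-- Generalized binomial coefficient `C(x, k) = x (x-1) ⋯ (x-k+1) / k!` with real upper
argument. -/
noncomputable def genBinom (x : ℝ) (k : ℕ) : ℝ :=
  (∏ i ∈ Finset.range k, (x - i)) / (Nat.factorial k)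

open Polynomial Finset

/-- `∏_{i<r} (X + (a+i))`. -/
noncomputable def pP (a : ℕ) (r : ℕ) : Polynomial ℝ :=
  ∏ i ∈ Finset.range r, (X + C ((a + i : ℕ) : ℝ))

/-- Polynomial version of `C(ν+2m,m)·ν/(ν+2m)`. -/
noncomputable def pA : ℕ → Polynomial ℝ
  | 0 => 1
  | (m+1) => C (((m+1).factorial : ℝ))⁻¹ * (X * pP (m+2) m)

/-- Polynomial version of `C(ν+2n,n)`. -/
noncomputable def pG (n : ℕ) : Polynomial ℝ :=
  C ((n.factorial : ℝ))⁻¹ * pP (n+1) n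

lemma pP_succ (a r : ℕ) : pP a (r+1) = pP a r * (X + C ((a + r : ℕ) : ℝ)) := by
  simp [pP, Finset.prod_range_succ]

lemma pP_succ' (a r : ℕ) : pP a (r+1) = (X + C ((a : ℕ) : ℝ)) * pP (a+1) r := by
  unfold pP
  rw [Finset.prod_range_succ']
  rw [Finset.prod_congr rfl (fun i _ => by rw [show a + (i+1) = (a+1)+i from by omega])]
  exact mul_comm _ _

lemma pA_rec (m : ℕ) :
    C ((m+1 : ℕ) : ℝ) * (X + C ((m+1 : ℕ) : ℝ)) * pA (m+1)
      = (X + C ((2*m : ℕ) : ℝ)) * (X + C ((2*m+1 : ℕ) : ℝ)) * pA m := by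
  cases m with
  | zero =>
      simp [pA, pP]
      ring
  | succ k =>
      have hprod : (X + C ((k+2 : ℕ) : ℝ)) * pP (k+3) (k+1)
          = pP (k+2) k * (X + C ((2*k+2 : ℕ) : ℝ)) * (X + C ((2*k+3 : ℕ) : ℝ)) := by
        have h1 : pP (k+2) (k+2) = (X + C ((k+2 : ℕ) : ℝ)) * pP (k+3) (k+1) :=
          pP_succ' (k+2) (k+1)
        have h2 : pP (k+2) (k+2)
            = pP (k+2) k * (X + C ((2*k+2 : ℕ) : ℝ)) * (X + C ((2*k+3 : ℕ) : ℝ)) := by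
          rw [pP_succ, pP_succ]
          rw [show k+2+k = 2*k+2 from by omega, show k+2+(k+1) = 2*k+3 from by omega]
        rw [← h1, h2]
      have hfac : C ((((k+2).factorial : ℕ) : ℝ))⁻¹
          = C (((k+2 : ℕ) : ℝ))⁻¹ * C ((((k+1).factorial : ℕ) : ℝ))⁻¹ := by
        rw [← C_mul, ← mul_inv]
        congr 1
        rw [Nat.factorial_succ]
        push_cast
        ring
      have hk : C (((k+2 : ℕ) : ℝ)) * C (((k+2 : ℕ) : ℝ))⁻¹ = 1 := by
        rw [← C_mul, mul_inv_cancel₀ (by positivity), C_1]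
      show C ((k+1+1 : ℕ) : ℝ) * (X + C ((k+1+1 : ℕ) : ℝ))
            * (C ((((k+2).factorial : ℕ) : ℝ))⁻¹ * (X * pP (k+3) (k+1)))
          = (X + C ((2*(k+1) : ℕ) : ℝ)) * (X + C ((2*(k+1)+1 : ℕ) : ℝ))
            * (C ((((k+1).factorial : ℕ) : ℝ))⁻¹ * (X * pP (k+2) k))
      rw [hfac]
      rw [show ((k+1+1 : ℕ) : ℝ) = ((k+2 : ℕ) : ℝ) from by push_cast; ring,
        show ((2*(k+1) : ℕ) : ℝ) = ((2*k+2 : ℕ) : ℝ) from by push_cast; ring,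
        show ((2*(k+1)+1 : ℕ) : ℝ) = ((2*k+3 : ℕ) : ℝ) from by push_cast; ring]
      linear_combination
        (C (((k+2 : ℕ) : ℝ)) * C (((k+2 : ℕ) : ℝ))⁻¹
          * C ((((k+1).factorial : ℕ) : ℝ))⁻¹ * X) * hprod
        + (C ((((k+1).factorial : ℕ) : ℝ))⁻¹ * X * pP (k+2) k
            * (X + C ((2*k+2 : ℕ) : ℝ)) * (X + C ((2*k+3 : ℕ) : ℝ))) * hk

lemma pG_rec (n : ℕ) :
    C ((n+1 : ℕ) : ℝ) * (X + C ((n+1 : ℕ) : ℝ)) * pG (n+1)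
      = (X + C ((2*n+1 : ℕ) : ℝ)) * (X + C ((2*n+2 : ℕ) : ℝ)) * pG n := by
  have hprod : (X + C ((n+1 : ℕ) : ℝ)) * pP (n+2) (n+1)
      = pP (n+1) n * (X + C ((2*n+1 : ℕ) : ℝ)) * (X + C ((2*n+2 : ℕ) : ℝ)) := by
    have h1 : pP (n+1) (n+2) = (X + C ((n+1 : ℕ) : ℝ)) * pP (n+2) (n+1) :=
      pP_succ' (n+1) (n+1)
    have h2 : pP (n+1) (n+2)
        = pP (n+1) n * (X + C ((2*n+1 : ℕ) : ℝ)) * (X + C ((2*n+2 : ℕ) : ℝ)) := by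
      rw [pP_succ, pP_succ]
      rw [show n+1+n = 2*n+1 from by omega, show n+1+(n+1) = 2*n+2 from by omega]
    rw [← h1, h2]
  have hfac : C ((((n+1).factorial : ℕ) : ℝ))⁻¹
      = C (((n+1 : ℕ) : ℝ))⁻¹ * C (((n.factorial : ℕ) : ℝ))⁻¹ := by
    rw [← C_mul, ← mul_inv]
    congr 1
    rw [Nat.factorial_succ]
    push_cast
    ring
  have hk : C (((n+1 : ℕ) : ℝ)) * C (((n+1 : ℕ) : ℝ))⁻¹ = 1 := by
    rw [← C_mul, mul_inv_cancel₀ (by positivity), C_1]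
  show C ((n+1 : ℕ) : ℝ) * (X + C ((n+1 : ℕ) : ℝ))
        * (C ((((n+1).factorial : ℕ) : ℝ))⁻¹ * pP (n+2) (n+1))
      = (X + C ((2*n+1 : ℕ) : ℝ)) * (X + C ((2*n+2 : ℕ) : ℝ))
        * (C (((n.factorial : ℕ) : ℝ))⁻¹ * pP (n+1) n)
  rw [hfac]
  linear_combination
    (C (((n+1 : ℕ) : ℝ)) * C (((n+1 : ℕ) : ℝ))⁻¹ * C (((n.factorial : ℕ) : ℝ))⁻¹) * hprod
    + (C (((n.factorial : ℕ) : ℝ))⁻¹ * pP (n+1) n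
        * (X + C ((2*n+1 : ℕ) : ℝ)) * (X + C ((2*n+2 : ℕ) : ℝ))) * hk

lemma perj (j m : ℕ) :
    C ((j+m+1 : ℕ) : ℝ) * (X + C ((j+m+1 : ℕ) : ℝ))
        * (C (((2*j).choose j : ℕ) : ℝ) * pA (m+1))
      - (X + C ((2*(j+m)+1 : ℕ) : ℝ)) * (X + C ((2*(j+m)+2 : ℕ) : ℝ))
        * (C (((2*j).choose j : ℕ) : ℝ) * pA m)
    = (-(C ((j+1 : ℕ) : ℝ) * (X + C ((j+2*m+1 : ℕ) : ℝ))
          * C (((2*(j+1)).choose (j+1) : ℕ) : ℝ) * pA m))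
      - (-(C ((j : ℕ) : ℝ) * (X + C ((j+2*m+2 : ℕ) : ℝ))
          * C (((2*j).choose j : ℕ) : ℝ) * pA (m+1))) := by
  have hD : (C ((m+1 : ℕ) : ℝ) * (X + C ((m+1 : ℕ) : ℝ))) ≠ 0 :=
    mul_ne_zero (Polynomial.C_ne_zero.mpr (by positivity)) ((monic_X_add_C _).ne_zero)
  apply mul_left_cancel₀ hD
  have h1 := pA_rec m
  have hcN : (j+1) * ((2*(j+1)).choose (j+1)) = 2*(2*j+1)*((2*j).choose j) := by
    simpa [Nat.centralBinom] using Nat.succ_mul_centralBinom_succ j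
  have hc' : (((j+1 : ℕ) : ℝ[X])) * ((((2*(j+1)).choose (j+1) : ℕ)) : ℝ[X])
      = 2 * (((2*j+1 : ℕ)) : ℝ[X]) * ((((2*j).choose j : ℕ)) : ℝ[X]) := by
    have := congrArg (fun t : ℕ => (t : ℝ[X])) hcN
    push_cast at this
    push_cast
    linear_combination this
  simp only [map_natCast] at h1 hc' ⊢
  push_cast at h1 hc' ⊢
  linear_combination
    ((((2*j).choose j : ℕ) : ℝ[X])
      * (((j : ℝ[X])+(m : ℝ[X])+1) * (X+(j : ℝ[X])+(m : ℝ[X])+1)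
          - (j : ℝ[X]) * (X+(j : ℝ[X])+2*(m : ℝ[X])+2))) * h1
    + (((m : ℝ[X])+1) * (X+(m : ℝ[X])+1) * pA m * (X+(j : ℝ[X])+2*(m : ℝ[X])+1)) * hc'

lemma key (n : ℕ) :
    ∑ j ∈ Finset.range (n+1), C (((2*j).choose j : ℕ) : ℝ) * pA (n-j) = pG n := by
  induction n with
  | zero => simp [pA, pG, pP]
  | succ n ih =>
      have hD : (C ((n+1 : ℕ) : ℝ) * (X + C ((n+1 : ℕ) : ℝ))) ≠ 0 :=
        mul_ne_zero (Polynomial.C_ne_zero.mpr (by positivity)) ((monic_X_add_C _).ne_zero)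
      apply mul_left_cancel₀ hD
      set Hf : ℕ → ℝ[X] := fun k =>
        -(C ((k : ℕ) : ℝ) * (X + C ((2*n+2-k : ℕ) : ℝ))
          * C (((2*k).choose k : ℕ) : ℝ) * pA (n+1-k)) with hHf
      have hterm : ∀ j ∈ Finset.range (n+1),
          C ((n+1 : ℕ) : ℝ) * (X + C ((n+1 : ℕ) : ℝ))
              * (C (((2*j).choose j : ℕ) : ℝ) * pA (n+1-j))
            - (X + C ((2*n+1 : ℕ) : ℝ)) * (X + C ((2*n+2 : ℕ) : ℝ))
              * (C (((2*j).choose j : ℕ) : ℝ) * pA (n-j))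
          = Hf (j+1) - Hf j := by
        intro j hj
        have hj' : j ≤ n := by
          have := Finset.mem_range.mp hj; omega
        obtain ⟨m, rfl⟩ : ∃ m, n = j + m := ⟨n - j, by omega⟩
        rw [hHf]
        simp only [show j+m+1-j = m+1 from by omega, show j+m-j = m from by omega,
          show 2*(j+m)+2-(j+1) = j+2*m+1 from by omega,
          show 2*(j+m)+2-j = j+2*m+2 from by omega,
          show j+m+1-(j+1) = m from by omega,
          show 2*(j+m)+1 = 2*(j+m)+1 from rfl]
        exact perj j m
      have htel : ∑ j ∈ Finset.range (n+1),
          (C ((n+1 : ℕ) : ℝ) * (X + C ((n+1 : ℕ) : ℝ))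
              * (C (((2*j).choose j : ℕ) : ℝ) * pA (n+1-j))
            - (X + C ((2*n+1 : ℕ) : ℝ)) * (X + C ((2*n+2 : ℕ) : ℝ))
              * (C (((2*j).choose j : ℕ) : ℝ) * pA (n-j)))
          = Hf (n+1) - Hf 0 := by
        rw [Finset.sum_congr rfl hterm]
        exact Finset.sum_range_sub Hf (n+1)
      rw [Finset.sum_sub_distrib, ← Finset.mul_sum, ← Finset.mul_sum] at htel
      have hHf0 : Hf 0 = 0 := by simp [hHf]
      have hHfn : Hf (n+1) = -(C ((n+1 : ℕ) : ℝ) * (X + C ((n+1 : ℕ) : ℝ))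
          * C (((2*(n+1)).choose (n+1) : ℕ) : ℝ) * pA 0) := by
        rw [hHf]
        simp only [show 2*n+2-(n+1) = n+1 from by omega, show n+1-(n+1) = 0 from by omega]
      have hsum : ∑ j ∈ Finset.range (n+2),
            C (((2*j).choose j : ℕ) : ℝ) * pA (n+1-j)
          = (∑ j ∈ Finset.range (n+1), C (((2*j).choose j : ℕ) : ℝ) * pA (n+1-j))
            + C (((2*(n+1)).choose (n+1) : ℕ) : ℝ) * pA 0 := by
        rw [Finset.sum_range_succ]
        simp
      rw [hHf0, hHfn, sub_zero] at htel
      rw [hsum, pG_rec n, ← ih]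
      linear_combination htel

lemma eval_pP (ν : ℝ) (a r : ℕ) :
    Polynomial.eval ν (pP a r) = ∏ i ∈ Finset.range r, (ν + ((a + i : ℕ) : ℝ)) := by
  simp [pP, Polynomial.eval_prod]

lemma genBinom_eq_eval_pG (ν : ℝ) (n : ℕ) :
    genBinom (ν + 2 * n) n = Polynomial.eval ν (pG n) := by
  unfold genBinom pG
  rw [Polynomial.eval_mul, Polynomial.eval_C, eval_pP]
  rw [div_eq_inv_mul]
  congr 1
  rw [← Finset.prod_range_reflect (fun i => ν + ((n + 1 + i : ℕ) : ℝ)) n]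
  apply Finset.prod_congr rfl
  intro i hi
  have hi' : i < n := Finset.mem_range.mp hi
  have : ((n + 1 + (n - 1 - i) : ℕ) : ℝ) = 2 * n - i := by
    rw [show n + 1 + (n - 1 - i) = 2*n - i from by omega]
    push_cast [Nat.cast_sub (by omega : i ≤ 2*n)]
    ring
  rw [this]
  ring

lemma summand_eq (ν : ℝ) (k : ℕ) (hk : ν + 2 * k ≠ 0) :
    genBinom (ν + 2 * k) k * ν / (ν + 2 * k) = Polynomial.eval ν (pA k) := by
  cases k with
  | zero =>
      simp only [Nat.cast_zero, mul_zero, add_zero] at hk ⊢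
      unfold genBinom
      simp [pA, div_self hk]
  | succ m =>
      have hfac : ((m+1).factorial : ℝ) ≠ 0 := by positivity
      unfold genBinom
      rw [show pA (m+1) = C (((m+1).factorial : ℝ))⁻¹ * (X * pP (m+2) m) from rfl]
      rw [Polynomial.eval_mul, Polynomial.eval_C, Polynomial.eval_mul, Polynomial.eval_X,
        eval_pP]
      have hprod : ∏ i ∈ Finset.range (m+1), (ν + 2 * ((m+1 : ℕ) : ℝ) - i)
          = (ν + 2 * ((m+1 : ℕ) : ℝ))
            * ∏ i ∈ Finset.range m, (ν + ((m + 2 + i : ℕ) : ℝ)) := by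
        rw [Finset.prod_range_succ']
        rw [mul_comm]
        congr 1
        · push_cast; ring
        · rw [← Finset.prod_range_reflect (fun i => ν + ((m + 2 + i : ℕ) : ℝ)) m]
          apply Finset.prod_congr rfl
          intro i hi
          have hi' : i < m := Finset.mem_range.mp hi
          have h1 : ((m + 2 + (m - 1 - i) : ℕ) : ℝ) = 2 * m + 1 - i := by
            rw [show m + 2 + (m - 1 - i) = 2*m + 1 - i from by omega]
            push_cast [Nat.cast_sub (by omega : i ≤ 2*m+1)]
            ring
          rw [h1]
          push_cast
          ring
      rw [hprod]
      have hk' : 2 + ν + (m:ℝ) * 2 ≠ 0 := by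
        intro hh; apply hk; push_cast; linarith
      have hfac2 : ((1+m).factorial : ℝ) ≠ 0 := by positivity
      have hk2 : ν + 2 * ((m:ℝ) + 1) ≠ 0 := by
        intro hh; apply hk; push_cast; linarith
      field_simp

theorem central_binom_convolution (n : ℕ) (ν : ℝ)
    (h : ∀ k : ℕ, k ≤ n → ν + 2 * k ≠ 0) :
    ∑ j ∈ Finset.range (n + 1),
        ((2 * j).choose j : ℝ) * genBinom (ν + 2 * (n - j)) (n - j) * ν / (ν + 2 * (n - j))
      = genBinom (ν + 2 * n) n := by
  have hkey := congrArg (Polynomial.eval ν) (key n)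
  rw [Polynomial.eval_finset_sum] at hkey
  rw [genBinom_eq_eval_pG]
  rw [← hkey]
  apply Finset.sum_congr rfl
  intro j hj
  have hjn : n - j ≤ n := Nat.sub_le n j
  have hne := h (n - j) hjn
  have hj' : j ≤ n := by have := Finset.mem_range.mp hj; omega
  rw [show ν + 2 * ((n:ℝ) - (j:ℝ)) = ν + 2 * ((n - j : ℕ) : ℝ) from by
    rw [Nat.cast_sub hj']]
  rw [Polynomial.eval_mul, Polynomial.eval_C]
  rw [← summand_eq ν (n - j) hne]
  rw [mul_div_assoc, mul_div_assoc, mul_assoc]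
end

section
/- For real x with 0 < 4x < 1 and natural number k ≥ 1, the generating function identity ((1-√(1-4x))/(2x))^k = ∑_{n=0}^∞ k·(2n+k-1)!/(n!·(n+k)!) · x^n holds. -/
/-!
Let `F k = ∑ₙ a(k, n) xⁿ` be the series on the right (with `F 0 = 1`). The ballot recurrence
`a(k+1, n+1) = a(k, n+1) + a(k+2, n)` gives `F (k+1) = F k + x F (k+2)`, a linear recurrence whose
characteristic roots `c = (1 - √(1-4x))/(2x)` and `d = (1 + √(1-4x))/(2x)` are the roots of
`x y² - y + 1`; hence `F (k+1) - c F k = dᵏ (F 1 - c F 0)`. The bound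
`a(k, n) ≤ (2n+k).choose n ≤ 2ᵏ 4ⁿ` makes `F k = O(2ᵏ)`, whereas `d > 2`.
So `F 1 = c F 0`, and `F k = cᵏ`.
-/

open Nat

section LinearRecurrence

variable {x c d : ℝ} {u : ℕ → ℝ}

theorem eq_zero_of_abs_mul_pow_le {a r s M : ℝ} (hs : 0 < s) (hsr : s < r)
    (h : ∀ k : ℕ, |a| * r ^ k ≤ M * s ^ k) : a = 0 := by
  by_contra ha
  have hM : ∀ k : ℕ, (r / s) ^ k ≤ M / |a| := fun k => by
    rw [div_pow, div_le_div_iff₀ (by positivity) (abs_pos.2 ha)]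
    linarith [h k]
  obtain ⟨k, hk⟩ := ((tendsto_pow_atTop_atTop_of_one_lt
    ((one_lt_div hs).2 hsr)).eventually_gt_atTop (M / |a|)).exists
  exact (hk.trans_le (hM k)).false

theorem sub_mul_eq_pow_mul_of_recurrence (hsum : x * (c + d) = 1) (hprod : x * (c * d) = 1)
    (hrec : ∀ k, u (k + 1) = u k + x * u (k + 2)) (k : ℕ) :
    u (k + 1) - c * u k = d ^ k * (u 1 - c * u 0) := by
  have hx : x ≠ 0 := left_ne_zero_of_mul_eq_one hsum
  induction k with
  | zero => simp
  | succ k ih =>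
    rw [pow_succ, mul_comm _ d, mul_assoc, ← ih]
    refine mul_left_cancel₀ hx ?_
    linear_combination -u (k + 1) * hsum + u k * hprod - hrec k

theorem eq_mul_pow_of_recurrence (hsum : x * (c + d) = 1) (hprod : x * (c * d) = 1) (hd : 2 < d)
    (hrec : ∀ k, u (k + 1) = u k + x * u (k + 2)) {M : ℝ} (hbound : ∀ k, |u k| ≤ M * 2 ^ k)
    (k : ℕ) : u k = u 0 * c ^ k := by
  have hgeom := sub_mul_eq_pow_mul_of_recurrence hsum hprod hrec
  have hw : u 1 - c * u 0 = 0 := by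
    refine eq_zero_of_abs_mul_pow_le two_pos hd (M := (2 + |c|) * M) fun k => ?_
    calc |u 1 - c * u 0| * d ^ k = |u (k + 1) - c * u k| := by
          rw [hgeom k, abs_mul, abs_pow, abs_of_pos (by linarith : 0 < d), mul_comm]
      _ ≤ |u (k + 1)| + |c| * |u k| := by rw [← abs_mul]; exact abs_sub _ _
      _ ≤ M * 2 ^ (k + 1) + |c| * (M * 2 ^ k) := by gcongr <;> exact hbound _
      _ = (2 + |c|) * M * 2 ^ k := by ring
  induction k with
  | zero => simp
  | succ k ih => linear_combination hgeom k + c * ih + d ^ k * hw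

end LinearRecurrence

noncomputable def catalanPowCoeff (k n : ℕ) : ℝ :=
  (k * (2 * n + k - 1)! : ℝ) / (n ! * (n + k)!)

@[simp]
theorem catalanPowCoeff_zero_left (n : ℕ) : catalanPowCoeff 0 n = 0 := by
  simp [catalanPowCoeff]

theorem catalanPowCoeff_succ_zero (k : ℕ) : catalanPowCoeff (k + 1) 0 = 1 := by
  rw [catalanPowCoeff, show 2 * 0 + (k + 1) - 1 = k by omega, zero_add, Nat.factorial_succ,
    Nat.factorial_zero]
  push_cast
  field_simp

theorem catalanPowCoeff_nonneg (k n : ℕ) : 0 ≤ catalanPowCoeff k n := by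
  unfold catalanPowCoeff; positivity

theorem catalanPowCoeff_succ_succ (k n : ℕ) :
    catalanPowCoeff (k + 1) (n + 1) = catalanPowCoeff k (n + 1) + catalanPowCoeff (k + 2) n := by
  simp only [catalanPowCoeff]
  rw [show 2 * (n + 1) + (k + 1) - 1 = (2 * n + k + 1) + 1 by omega,
    show 2 * (n + 1) + k - 1 = 2 * n + k + 1 by omega,
    show 2 * n + (k + 2) - 1 = 2 * n + k + 1 by omega,
    show n + 1 + (k + 1) = (n + k + 1) + 1 by omega, show n + 1 + k = n + k + 1 by omega,
    show n + (k + 2) = (n + k + 1) + 1 by omega, Nat.factorial_succ (2 * n + k + 1),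
    Nat.factorial_succ (n + k + 1), Nat.factorial_succ n]
  push_cast
  field_simp
  ring

theorem catalanPowCoeff_le_choose (k n : ℕ) : catalanPowCoeff k n ≤ (2 * n + k).choose n := by
  have hnum : k * (2 * n + k - 1)! ≤ (2 * n + k)! := by
    rcases Nat.eq_zero_or_pos k with rfl | hk
    · simp
    · rw [← Nat.mul_factorial_pred (by omega : 2 * n + k ≠ 0)]
      gcongr
      omega
  rw [Nat.cast_choose ℝ (by omega : n ≤ 2 * n + k), show 2 * n + k - n = n + k by omega,
    catalanPowCoeff]
  gcongr
  exact_mod_cast hnum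

theorem catalanPowCoeff_le_two_pow_mul_four_pow (k n : ℕ) :
    catalanPowCoeff k n ≤ 2 ^ k * 4 ^ n := by
  calc catalanPowCoeff k n ≤ (2 * n + k).choose n := catalanPowCoeff_le_choose k n
    _ ≤ 2 ^ (2 * n + k) := by exact_mod_cast Nat.choose_le_two_pow _ _
    _ = 2 ^ k * 4 ^ n := by rw [pow_add, pow_mul, mul_comm]; norm_num

section Series

variable {x : ℝ}

theorem catalanPowCoeff_mul_pow_le (hx : 0 ≤ x) (k n : ℕ) :
    catalanPowCoeff k n * x ^ n ≤ 2 ^ k * (4 * x) ^ n := by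
  rw [mul_pow, ← mul_assoc]
  gcongr
  exact catalanPowCoeff_le_two_pow_mul_four_pow k n

theorem summable_catalanPowCoeff_mul_pow (hx : 0 ≤ x) (hx' : 4 * x < 1) (k : ℕ) :
    Summable fun n => catalanPowCoeff k n * x ^ n :=
  ((summable_geometric_of_lt_one (by positivity) hx').mul_left (2 ^ k)).of_nonneg_of_le
    (fun n => mul_nonneg (catalanPowCoeff_nonneg k n) (by positivity))
    (catalanPowCoeff_mul_pow_le hx k)

theorem tsum_catalanPowCoeff_mul_pow_le (hx : 0 ≤ x) (hx' : 4 * x < 1) (k : ℕ) :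
    ∑' n, catalanPowCoeff k n * x ^ n ≤ (1 - 4 * x)⁻¹ * 2 ^ k :=
  calc ∑' n, catalanPowCoeff k n * x ^ n ≤ ∑' n, 2 ^ k * (4 * x) ^ n :=
        (summable_catalanPowCoeff_mul_pow hx hx' k).tsum_le_tsum (catalanPowCoeff_mul_pow_le hx k)
          ((summable_geometric_of_lt_one (by positivity) hx').mul_left _)
    _ = (1 - 4 * x)⁻¹ * 2 ^ k := by
        rw [tsum_mul_left, tsum_geometric_of_lt_one (by positivity) hx', mul_comm]

theorem tsum_catalanPowCoeff_succ_mul_pow (hx : 0 ≤ x) (hx' : 4 * x < 1) (k : ℕ) :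
    ∑' n, catalanPowCoeff (k + 1) n * x ^ n
      = 1 + ∑' n, catalanPowCoeff k (n + 1) * x ^ (n + 1)
        + x * ∑' n, catalanPowCoeff (k + 2) n * x ^ n := by
  have hshift : Summable fun n => catalanPowCoeff k (n + 1) * x ^ (n + 1) :=
    (summable_nat_add_iff 1).mpr (summable_catalanPowCoeff_mul_pow hx hx' k)
  have hnext : Summable fun n => catalanPowCoeff (k + 2) n * x ^ (n + 1) := by
    simpa only [pow_succ, mul_comm _ x, mul_left_comm _ x]
      using (summable_catalanPowCoeff_mul_pow hx hx' (k + 2)).mul_left x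
  rw [(summable_catalanPowCoeff_mul_pow hx hx' (k + 1)).tsum_eq_zero_add,
    catalanPowCoeff_succ_zero]
  simp only [catalanPowCoeff_succ_succ, add_mul]
  rw [hshift.tsum_add hnext, ← tsum_mul_left, pow_zero, mul_one, add_assoc]
  congr 3 with n
  ring

/-- The series `∑ₙ catalanPowCoeff k n * x ^ n`, corrected at `k = 0`, where the coefficient
formula degenerates to `0`. -/
noncomputable def catalanPowSeries (x : ℝ) : ℕ → ℝ
  | 0 => 1
  | k + 1 => ∑' n, catalanPowCoeff (k + 1) n * x ^ n

theorem catalanPowSeries_succ (hx : 0 ≤ x) (hx' : 4 * x < 1) (k : ℕ) :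
    catalanPowSeries x (k + 1) = catalanPowSeries x k + x * catalanPowSeries x (k + 2) := by
  rw [catalanPowSeries, catalanPowSeries, tsum_catalanPowCoeff_succ_mul_pow hx hx']
  cases k with
  | zero => simp [catalanPowSeries]
  | succ k =>
    rw [catalanPowSeries, (summable_catalanPowCoeff_mul_pow hx hx' (k + 1)).tsum_eq_zero_add,
      catalanPowCoeff_succ_zero]
    ring

theorem abs_catalanPowSeries_le (hx : 0 ≤ x) (hx' : 4 * x < 1) (k : ℕ) :
    |catalanPowSeries x k| ≤ (1 - 4 * x)⁻¹ * 2 ^ k := by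
  cases k with
  | zero => simpa [catalanPowSeries] using one_le_inv₀ (by linarith) |>.2 (by linarith)
  | succ k =>
    rw [catalanPowSeries, abs_of_nonneg (tsum_nonneg fun n =>
      mul_nonneg (catalanPowCoeff_nonneg _ n) (by positivity))]
    exact tsum_catalanPowCoeff_mul_pow_le hx hx' (k + 1)

theorem catalanPowSeries_eq_pow (hx : 0 < 4 * x) (hx' : 4 * x < 1) (k : ℕ) :
    catalanPowSeries x k = ((1 - √(1 - 4 * x)) / (2 * x)) ^ k := by
  have hx0 : 0 < x := by linarith
  have hs : √(1 - 4 * x) ^ 2 = 1 - 4 * x := Real.sq_sqrt (by linarith)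
  have hs0 : 0 ≤ √(1 - 4 * x) := Real.sqrt_nonneg _
  generalize √(1 - 4 * x) = s at hs hs0 ⊢
  rw [eq_mul_pow_of_recurrence (d := (1 + s) / (2 * x)) ?_ ?_ ?_
    (catalanPowSeries_succ hx0.le hx') (abs_catalanPowSeries_le hx0.le hx') k,
    catalanPowSeries, one_mul]
  · field_simp
    ring
  · field_simp
    linear_combination -hs
  · rw [lt_div_iff₀ (by positivity)]
    linarith

end Series

theorem catalan_gf_power (x : ℝ) (hx : 0 < 4 * x) (hx' : 4 * x < 1) (k : ℕ) (hk : 1 ≤ k) :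
    ((1 - Real.sqrt (1 - 4 * x)) / (2 * x)) ^ k
      = ∑' n : ℕ, (k * Nat.factorial (2 * n + k - 1) : ℝ)
          / (Nat.factorial n * Nat.factorial (n + k)) * x ^ n := by
  obtain ⟨j, rfl⟩ := Nat.exists_eq_add_of_le' hk
  exact (catalanPowSeries_eq_pow hx hx' (j + 1)).symm
end

section
/- For real x with 0 < 4x < 1 and natural number ν, the identity (1/√(1-4x)) · ((1-√(1-4x))/(2x))^ν = ∑_{k=0}^∞ C(ν+2k, k) x^k holds, where C(m,k) is the binomial coefficient. -/
/-!
Pascal's rule turns `F ν = ∑ₖ C(ν + 2k, k) xᵏ` into a solution of the linear recurrence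
`F (ν + 1) = F ν + x F (ν + 2)`, whose characteristic roots are
`y = (1 - √(1 - 4x)) / (2x)` and `z = (1 + √(1 - 4x)) / (2x)`.
Since `C(n, k) ≤ 2ⁿ`, `F ν = O(2^ν)`, while `|z| > 2`; so the `z`-component of `F` vanishes
and `F ν = y^ν F 0`. Finally `C(2k + 2, k + 1) = 2 C(2k + 1, k)` gives
`F 0 = 1 + 2x F 1 = 1 + (1 - √(1 - 4x)) F 0`, that is `F 0 = 1 / √(1 - 4x)`.
-/

lemma eq_zero_of_abs_mul_pow_le_s7 {c z r C : ℝ} (hr : 0 < r) (hrz : r < |z|)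
    (h : ∀ n : ℕ, |c * z ^ n| ≤ C * r ^ n) : c = 0 := by
  by_contra hc
  obtain ⟨n, hn⟩ := ((tendsto_pow_atTop_atTop_of_one_lt
    ((one_lt_div hr).2 hrz)).eventually_gt_atTop (C / |c|)).exists
  rw [div_pow, lt_div_iff₀ (pow_pos hr n), div_mul_eq_mul_div, div_lt_iff₀ (abs_pos.2 hc)] at hn
  have hcn := h n
  rw [abs_mul, abs_pow] at hcn
  linarith

/-- `hrec` is the recurrence `f (n + 2) = (y + z) f (n + 1) - y z f n`, with characteristic roots
`y` and `z`. -/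
theorem eq_pow_mul_of_recurrence {f : ℕ → ℝ} {y z r C : ℝ} (hr : 0 < r) (hrz : r < |z|)
    (hrec : ∀ n, f (n + 2) - y * f (n + 1) = z * (f (n + 1) - y * f n))
    (hf : ∀ n, |f n| ≤ C * r ^ n) (n : ℕ) : f n = y ^ n * f 0 := by
  have hgeom : ∀ n, f (n + 1) - y * f n = (f 1 - y * f 0) * z ^ n := by
    intro n
    induction n with
    | zero => simp
    | succ n ih => rw [hrec, ih]; ring
  have hz_part : f 1 - y * f 0 = 0 := by
    refine eq_zero_of_abs_mul_pow_le_s7 hr hrz (C := C * (r + |y|)) fun n => ?_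
    rw [← hgeom]
    calc |f (n + 1) - y * f n| ≤ |f (n + 1)| + |y| * |f n| := by
          rw [← abs_mul]; exact abs_sub _ _
      _ ≤ C * r ^ (n + 1) + |y| * (C * r ^ n) := by gcongr <;> apply hf
      _ = C * (r + |y|) * r ^ n := by ring
  induction n with
  | zero => simp
  | succ n ih => linear_combination hgeom n + y * ih + z ^ n * hz_part

noncomputable def shiftedCentralBinomGF (ν : ℕ) (x : ℝ) : ℝ :=
  ∑' k : ℕ, ((ν + 2 * k).choose k : ℝ) * x ^ k

namespace shiftedCentralBinomGF

variable {x : ℝ}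

lemma abs_choose_mul_pow_le (ν k : ℕ) :
    |((ν + 2 * k).choose k : ℝ) * x ^ k| ≤ 2 ^ ν * (4 * |x|) ^ k := by
  rw [abs_mul, abs_pow, Nat.abs_cast, mul_pow, ← mul_assoc]
  gcongr
  calc ((ν + 2 * k).choose k : ℝ) ≤ 2 ^ (ν + 2 * k) := mod_cast Nat.choose_le_two_pow _ _
    _ = 2 ^ ν * 4 ^ k := by rw [pow_add, pow_mul]; norm_num

lemma summable (hx : 4 * |x| < 1) (ν : ℕ) :
    Summable fun k : ℕ => ((ν + 2 * k).choose k : ℝ) * x ^ k :=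
  .of_norm_bounded ((summable_geometric_of_lt_one (by positivity) hx).mul_left _)
    (abs_choose_mul_pow_le ν)

lemma abs_le (hx : 4 * |x| < 1) (ν : ℕ) :
    |shiftedCentralBinomGF ν x| ≤ (1 - 4 * |x|)⁻¹ * 2 ^ ν := by
  rw [shiftedCentralBinomGF, ← Real.norm_eq_abs, mul_comm]
  exact tsum_of_norm_bounded ((hasSum_geometric_of_lt_one (by positivity) hx).mul_left _)
    (abs_choose_mul_pow_le ν)

lemma recurrence (hx : 4 * |x| < 1) (ν : ℕ) :
    shiftedCentralBinomGF (ν + 1) x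
      = shiftedCentralBinomGF ν x + x * shiftedCentralBinomGF (ν + 2) x := by
  have hpascal (k : ℕ) : (ν + 1 + 2 * (k + 1)).choose (k + 1)
      = (ν + 2 * (k + 1)).choose (k + 1) + (ν + 2 + 2 * k).choose k := by
    rw [show ν + 1 + 2 * (k + 1) = ν + 2 + 2 * k + 1 by ring,
      show ν + 2 * (k + 1) = ν + 2 + 2 * k by ring, Nat.choose_succ_succ', add_comm]
  unfold shiftedCentralBinomGF
  rw [(summable hx (ν + 1)).tsum_eq_zero_add, (summable hx ν).tsum_eq_zero_add,
    ← tsum_mul_left, add_assoc (_ * x ^ 0),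
    ← ((summable_nat_add_iff 1).mpr (summable hx ν)).tsum_add
      ((summable hx (ν + 2)).mul_left x)]
  congr 1
  · simp
  · refine tsum_congr fun k => ?_
    rw [hpascal]
    push_cast
    ring

lemma zero_eq_one_add (hx : 4 * |x| < 1) :
    shiftedCentralBinomGF 0 x = 1 + 2 * x * shiftedCentralBinomGF 1 x := by
  have hchoose (k : ℕ) : (0 + 2 * (k + 1)).choose (k + 1) = 2 * (1 + 2 * k).choose k := by
    rw [show 0 + 2 * (k + 1) = 2 * k + 1 + 1 by ring, Nat.choose_succ_succ', Nat.choose_symm_half,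
      add_comm 1]
    ring
  unfold shiftedCentralBinomGF
  rw [(summable hx 0).tsum_eq_zero_add, ← tsum_mul_left]
  congr 1
  · simp
  · refine tsum_congr fun k => ?_
    rw [hchoose]
    push_cast
    ring

theorem eq_one_div_sqrt_mul_pow (hx0 : x ≠ 0) (hx : 4 * |x| < 1) (ν : ℕ) :
    shiftedCentralBinomGF ν x
      = 1 / √(1 - 4 * x) * ((1 - √(1 - 4 * x)) / (2 * x)) ^ ν := by
  have hpos : 0 < 1 - 4 * x := by linarith [le_abs_self x]
  set s := √(1 - 4 * x)
  have hs : 0 < s := Real.sqrt_pos.2 hpos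
  have hs2 : s ^ 2 = 1 - 4 * x := Real.sq_sqrt hpos.le
  set y := (1 - s) / (2 * x) with hy
  set z := (1 + s) / (2 * x) with hz
  have hsum : x * (y + z) = 1 := by rw [hy, hz]; field_simp; ring
  have hprod : x * (y * z) = 1 := by rw [hy, hz]; field_simp; linear_combination -hs2
  have hz_gt : 2 < |z| := by
    rw [hz, abs_div, abs_mul, abs_two, lt_div_iff₀ (by positivity),
      abs_of_pos (by positivity : 0 < 1 + s)]
    linarith
  have hrec (n : ℕ) : shiftedCentralBinomGF (n + 2) x - y * shiftedCentralBinomGF (n + 1) x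
      = z * (shiftedCentralBinomGF (n + 1) x - y * shiftedCentralBinomGF n x) := by
    refine mul_left_cancel₀ hx0 ?_
    linear_combination -(recurrence hx n) - shiftedCentralBinomGF (n + 1) x * hsum
      + shiftedCentralBinomGF n x * hprod
  have hgeom := eq_pow_mul_of_recurrence two_pos hz_gt hrec (abs_le hx)
  have h2xy : 2 * x * y = 1 - s := by rw [hy]; field_simp
  have hF0 : shiftedCentralBinomGF 0 x = 1 / s := by
    rw [eq_div_iff hs.ne']
    linear_combination zero_eq_one_add hx + 2 * x * hgeom 1 + shiftedCentralBinomGF 0 x * h2xy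
  rw [hgeom, hF0]
  ring

end shiftedCentralBinomGF

theorem wilf_2_5_15 (x : ℝ) (hx : 0 < 4 * x) (hx' : 4 * x < 1) (ν : ℕ) :
    1 / Real.sqrt (1 - 4 * x) * ((1 - Real.sqrt (1 - 4 * x)) / (2 * x)) ^ ν
      = ∑' k : ℕ, ((ν + 2 * k).choose k : ℝ) * x ^ k := by
  have hx0 : 0 < x := by linarith
  exact (shiftedCentralBinomGF.eq_one_div_sqrt_mul_pow hx0.ne' (by rwa [abs_of_pos hx0]) ν).symm
end

section
/- For real ν > 0 and 0 < x ≤ 1/4, one has ∫_0^{√x} t^{ν-1}/√(1-4t²) · ((1-√(1-4t²))/(2t²))^ν dt = (1/ν) · x^{ν/2} · ((1-√(1-4x))/(2x))^ν. -/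
/-!
With `C(z) = (1 - √(1 - 4z)) / (2z)` the Catalan generating function and `s = √(1 - 4t²)`,
the function `G(t) = t C(t²) = 2t / (1 + s)` satisfies `G' = C(t²) / s`. Since the integrand is
`t^(ν-1) C(t²)^ν / s = G^(ν-1) G'`, it has the antiderivative `G^ν / ν`, which vanishes at `0`
and equals `x^(ν/2) C(x)^ν / ν` at `√x`. The integrand is nonnegative, so its integrability near
the singularity at `0` (when `ν < 1`) follows from the existence of the continuous antiderivative.
-/

open Real MeasureTheory Set

theorem integral_Ioo_eq_sub_of_hasDerivAt_of_nonneg {f F : ℝ → ℝ} {a b : ℝ} (hab : a ≤ b)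
    (hcont : ContinuousOn F (Icc a b)) (hderiv : ∀ t ∈ Ioo a b, HasDerivAt F (f t) t)
    (hf : ∀ t ∈ Ioo a b, 0 ≤ f t) :
    ∫ t in Ioo a b, f t = F b - F a := by
  rw [← integral_Ioc_eq_integral_Ioo, ← intervalIntegral.integral_of_le hab]
  exact intervalIntegral.integral_eq_sub_of_hasDerivAt_of_le hab hcont hderiv
    ((intervalIntegrable_iff_integrableOn_Ioc_of_le hab).mpr
      (intervalIntegral.integrableOn_deriv_of_nonneg hcont hderiv hf))

/-- The generating function `(1 - √(1 - 4z)) / (2z)` of the Catalan numbers, in rationalized form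
(so that it takes the right value `1` at `z = 0`). -/
noncomputable def catalanGF (z : ℝ) : ℝ := 2 / (1 + √(1 - 4 * z))

theorem catalanGF_pos (z : ℝ) : 0 < catalanGF z := by
  unfold catalanGF
  positivity

theorem catalanGF_eq {z : ℝ} (hz0 : z ≠ 0) (hz : z ≤ 1 / 4) :
    catalanGF z = (1 - √(1 - 4 * z)) / (2 * z) := by
  have hsq : √(1 - 4 * z) ^ 2 = 1 - 4 * z := sq_sqrt (by linarith)
  have hden : 1 + √(1 - 4 * z) ≠ 0 := by positivity
  unfold catalanGF
  field_simp
  linear_combination hsq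

theorem continuous_catalanGF : Continuous catalanGF :=
  continuous_const.div (continuous_const.add (continuous_const.sub (continuous_const_mul 4)).sqrt)
    fun _ ↦ by positivity

theorem hasDerivAt_mul_catalanGF_sq {t : ℝ} (ht : 4 * t ^ 2 < 1) :
    HasDerivAt (fun t ↦ t * catalanGF (t ^ 2)) (catalanGF (t ^ 2) / √(1 - 4 * t ^ 2)) t := by
  have hpos : 0 < 1 - 4 * t ^ 2 := by linarith
  have hs : 0 < √(1 - 4 * t ^ 2) := sqrt_pos.mpr hpos
  have hsq : √(1 - 4 * t ^ 2) ^ 2 = 1 - 4 * t ^ 2 := sq_sqrt hpos.le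
  have hinner : HasDerivAt (fun t : ℝ ↦ 1 - 4 * t ^ 2) (-(4 * (2 * t))) t := by
    simpa using ((hasDerivAt_pow 2 t).const_mul 4).const_sub 1
  have hden := ((hasDerivAt_sqrt hpos.ne').comp t hinner).const_add 1
  have hprod := (hasDerivAt_id t).mul ((hasDerivAt_const t (2 : ℝ)).div hden (by positivity))
  unfold catalanGF
  refine hprod.congr_deriv ?_
  simp only [Pi.div_apply, Function.comp_apply, id, zero_mul, zero_sub]
  field_simp
  linear_combination hsq

theorem hasDerivAt_rpow_mul_catalanGF_sq {ν t : ℝ} (hν : ν ≠ 0) (ht0 : 0 < t)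
    (ht : 4 * t ^ 2 < 1) :
    HasDerivAt (fun t ↦ (t * catalanGF (t ^ 2)) ^ ν / ν)
      (t ^ (ν - 1) / √(1 - 4 * t ^ 2) * catalanGF (t ^ 2) ^ ν) t := by
  have hC := catalanGF_pos (t ^ 2)
  have hG := ((hasDerivAt_mul_catalanGF_sq ht).rpow_const
    (Or.inl (mul_pos ht0 hC).ne') (p := ν)).div_const ν
  refine hG.congr_deriv ?_
  rw [mul_rpow ht0.le hC.le, rpow_sub_one hC.ne']
  field_simp

theorem catalan_integral_identity (ν x : ℝ) (hν : 0 < ν) (hx : 0 < x) (hx' : x ≤ 1 / 4) :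
    ∫ t in Set.Ioo (0 : ℝ) (Real.sqrt x),
        t ^ (ν - 1) / Real.sqrt (1 - 4 * t ^ 2)
          * ((1 - Real.sqrt (1 - 4 * t ^ 2)) / (2 * t ^ 2)) ^ ν
      = (1 / ν) * x ^ (ν / 2) * ((1 - Real.sqrt (1 - 4 * x)) / (2 * x)) ^ ν := by
  have hb : 0 < √x := sqrt_pos.mpr hx
  have hsmall : ∀ t ∈ Ioo 0 √x, 4 * t ^ 2 < 1 := fun t ⟨ht0, htb⟩ ↦ by
    nlinarith [sq_sqrt hx.le]
  have hcont : ContinuousOn (fun t ↦ (t * catalanGF (t ^ 2)) ^ ν / ν) (Icc 0 √x) :=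
    (((continuous_id.mul (continuous_catalanGF.comp (continuous_pow 2))).rpow_const
      fun _ ↦ Or.inr hν.le).div_const ν).continuousOn
  have hcatalan : ∀ t ∈ Ioo 0 √x, (1 - √(1 - 4 * t ^ 2)) / (2 * t ^ 2) = catalanGF (t ^ 2) :=
    fun t ht ↦ (catalanGF_eq (pow_ne_zero 2 ht.1.ne') (by linarith [hsmall t ht])).symm
  rw [integral_Ioo_eq_sub_of_hasDerivAt_of_nonneg hb.le hcont (fun t ht ↦ ?deriv)
    (fun t ht ↦ ?nonneg)]
  case deriv =>
    rw [hcatalan t ht]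
    exact hasDerivAt_rpow_mul_catalanGF_sq hν.ne' ht.1 (hsmall t ht)
  case nonneg =>
    rw [hcatalan t ht]
    exact mul_nonneg (div_nonneg (rpow_nonneg ht.1.le _) (sqrt_nonneg _))
      (rpow_nonneg (catalanGF_pos _).le _)
  have hroot : √x ^ ν = x ^ (ν / 2) := by
    rw [sqrt_eq_rpow, ← rpow_mul hx.le, one_div_mul_eq_div]
  rw [sq_sqrt hx.le, mul_rpow hb.le (catalanGF_pos x).le, hroot, catalanGF_eq hx.ne' hx',
    zero_mul, zero_rpow hν.ne']
  ring
end

section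
/- ∫_0^∞ K_0(x)² dx = π²/4, where K_0 is the modified Bessel function of the second kind of order zero. -/
/-- Modified Bessel function of the second kind, via the integral representation
`K_ν(x) = ∫_0^∞ exp(-x cosh t) cosh(ν t) dt` (valid for `x > 0`). -/
noncomputable def besselK (ν x : ℝ) : ℝ :=
  ∫ t in Set.Ioi (0 : ℝ), Real.exp (-x * Real.cosh t) * Real.cosh (ν * t)

/-! Writing `K₀(x) = ∫₀^∞ exp (-x cosh t) dt`, Tonelli turns `∫₀^∞ K₀(x)² dx` into
`∫₀^∞ ∫₀^∞ ds dt / (cosh s + cosh t)` once the `x`-integral is done. The inner integral is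
elementary and equals `s / sinh s`; expanding `1 / sinh s = 2 ∑ₙ exp (-(2n+1) s)` and
integrating termwise gives `2 ∑ₙ 1 / (2n+1)² = π² / 4` by Euler's `ζ(2) = π² / 6`. -/

open MeasureTheory Set Real Filter Topology

lemma lintegral_exp_neg_mul_Ioi {a : ℝ} (ha : 0 < a) :
    ∫⁻ x in Ioi 0, ENNReal.ofReal (exp (-a * x)) = ENNReal.ofReal a⁻¹ := by
  rw [← ofReal_integral_eq_lintegral_ofReal (integrableOn_exp_mul_Ioi (neg_neg_of_pos ha) 0)
    (.of_forall fun _ => (exp_pos _).le), integral_exp_mul_Ioi (neg_neg_of_pos ha)]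
  simp [div_neg, neg_div]

lemma lintegral_mul_exp_neg_mul_Ioi {b : ℝ} (hb : 0 < b) :
    ∫⁻ x in Ioi 0, ENNReal.ofReal (x * exp (-(b * x))) = ENNReal.ofReal (b ^ 2)⁻¹ := by
  have hGamma : ∫ x in Ioi 0, x * exp (-(b * x)) = (b ^ 2)⁻¹ := by
    simpa [one_div, inv_pow, show (2 : ℝ) - 1 = 1 by norm_num]
      using integral_rpow_mul_exp_neg_mul_Ioi two_pos hb
  rw [← ofReal_integral_eq_lintegral_ofReal (.of_integral_ne_zero (by rw [hGamma]; positivity)),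
    hGamma]
  filter_upwards [ae_restrict_mem measurableSet_Ioi] with x hx
  exact mul_nonneg (le_of_lt hx) (exp_pos _).le

lemma hasSum_inv_sinh {s : ℝ} (hs : 0 < s) :
    HasSum (fun n : ℕ => 2 * exp (-((2 * n + 1) * s))) (sinh s)⁻¹ := by
  have hr : exp (-(2 * s)) < 1 := exp_lt_one_iff.mpr (by linarith)
  have hgeom := (hasSum_geometric_of_lt_one (exp_pos _).le hr).mul_left (2 * exp (-s))
  rw [show 2 * exp (-s) * (1 - exp (-(2 * s)))⁻¹ = (sinh s)⁻¹ by
    rw [sinh_eq, exp_neg s, show 2 * s = s + s by ring, neg_add, exp_add, exp_neg s]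
    field_simp] at hgeom
  refine hgeom.congr_fun fun n => ?_
  rw [← exp_nat_mul, mul_assoc, ← exp_add]
  ring_nf

lemma hasSum_inv_odd_sq : HasSum (fun n : ℕ => ((2 * n + 1 : ℝ) ^ 2)⁻¹) (π ^ 2 / 8) := by
  have hzeta : HasSum (fun n : ℕ => ((n : ℝ) ^ 2)⁻¹) (π ^ 2 / 6) := by
    simpa [one_div] using hasSum_zeta_two
  have heven : HasSum (fun n : ℕ => (((2 * n : ℕ) : ℝ) ^ 2)⁻¹) (π ^ 2 / 24) := by
    rw [show π ^ 2 / 24 = 4⁻¹ * (π ^ 2 / 6) by ring]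
    refine (hzeta.mul_left 4⁻¹).congr_fun fun n => ?_
    push_cast
    ring
  have hodd : Summable fun n : ℕ => (((2 * n + 1 : ℕ) : ℝ) ^ 2)⁻¹ :=
    hzeta.summable.comp_injective fun a b h => by omega
  have hsplit :=
    (HasSum.even_add_odd (f := fun n : ℕ => ((n : ℝ) ^ 2)⁻¹) heven hodd.hasSum).unique hzeta
  rw [show π ^ 2 / 8 = ∑' n : ℕ, (((2 * n + 1 : ℕ) : ℝ) ^ 2)⁻¹ by linarith]
  exact_mod_cast hodd.hasSum

lemma hasDerivAt_log_one_add_exp_sub (c t : ℝ) :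
    HasDerivAt (fun t => log (1 + exp (c - t))) (-(exp (c - t) / (1 + exp (c - t)))) t := by
  have := (((hasDerivAt_id t).const_sub c).exp.const_add 1).log (by positivity)
  simpa [neg_div] using this

lemma tendsto_log_one_add_exp_sub_atTop (c : ℝ) :
    Tendsto (fun t => log (1 + exp (c - t))) atTop (𝓝 0) := by
  have hexp : Tendsto (fun t => exp (c - t)) atTop (𝓝 0) :=
    tendsto_exp_atBot.comp (tendsto_atBot_add_const_left _ c tendsto_neg_atTop_atBot)
  simpa [Function.comp_def] using
    (continuousAt_log one_ne_zero).tendsto.comp (by simpa using hexp.const_add 1)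

lemma integral_inv_cosh_add_cosh {s : ℝ} (hs : 0 < s) :
    IntegrableOn (fun t => (cosh s + cosh t)⁻¹) (Ioi 0) ∧
      ∫ t in Ioi 0, (cosh s + cosh t)⁻¹ = s / sinh s := by
  set G : ℝ → ℝ := fun t => (log (1 + exp (-s - t)) - log (1 + exp (s - t))) / sinh s
  have hG : ∀ t ∈ Ici (0 : ℝ), HasDerivAt G (cosh s + cosh t)⁻¹ t := by
    intro t _
    refine (((hasDerivAt_log_one_add_exp_sub (-s) t).sub
      (hasDerivAt_log_one_add_exp_sub s t)).div_const _).congr_deriv ?_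
    have hexp_sq : exp s ^ 2 - 1 ≠ 0 := by
      have := one_lt_exp_iff.mpr hs; nlinarith
    rw [exp_sub, exp_sub, cosh_eq, cosh_eq, sinh_eq, exp_neg s, exp_neg t]
    field_simp
    ring
  have hG_top : Tendsto G atTop (𝓝 0) := by
    simpa using ((tendsto_log_one_add_exp_sub_atTop (-s)).sub
      (tendsto_log_one_add_exp_sub_atTop s)).div_const (sinh s)
  have hG_zero : G 0 = -(s / sinh s) := by
    have : log (1 + exp s) = s + log (1 + exp (-s)) := by
      rw [show 1 + exp s = exp s * (1 + exp (-s)) by rw [mul_add, ← exp_add]; simp [add_comm],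
        log_mul (exp_pos s).ne' (by positivity), log_exp]
    simp only [G, sub_zero, this]
    ring
  have hpos : ∀ t ∈ Ioi (0 : ℝ), 0 ≤ (cosh s + cosh t)⁻¹ := fun t _ => by positivity
  refine ⟨integrableOn_Ioi_deriv_of_nonneg' hG hpos hG_top, ?_⟩
  rw [integral_Ioi_of_hasDerivAt_of_nonneg' hG hpos hG_top, hG_zero]
  ring

lemma lintegral_inv_cosh_add_cosh {s : ℝ} (hs : 0 < s) :
    ∫⁻ t in Ioi 0, ENNReal.ofReal (cosh s + cosh t)⁻¹ = ENNReal.ofReal (s / sinh s) := by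
  obtain ⟨hint, hval⟩ := integral_inv_cosh_add_cosh hs
  rw [← ofReal_integral_eq_lintegral_ofReal hint (.of_forall fun t => by positivity), hval]

lemma lintegral_div_sinh :
    ∫⁻ s in Ioi 0, ENNReal.ofReal (s / sinh s) = ENNReal.ofReal (π ^ 2 / 4) := by
  have hseries : ∀ s ∈ Ioi (0 : ℝ), ENNReal.ofReal (s / sinh s)
      = ∑' n : ℕ, 2 * ENNReal.ofReal (s * exp (-((2 * n + 1) * s))) := by
    intro s (hs : 0 < s)
    have hsum := (hasSum_inv_sinh hs).mul_left s
    rw [div_eq_mul_inv, ← hsum.tsum_eq,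
      ENNReal.ofReal_tsum_of_nonneg (fun n => by positivity) hsum.summable]
    congr 1 with n
    rw [mul_left_comm, ENNReal.ofReal_mul zero_le_two, ENNReal.ofReal_ofNat]
  rw [setLIntegral_congr_fun measurableSet_Ioi hseries, lintegral_tsum (fun n => by fun_prop)]
  have hterm (n : ℕ) : 2 * ∫⁻ s in Ioi 0, ENNReal.ofReal (s * exp (-((2 * n + 1) * s)))
      = ENNReal.ofReal (2 * ((2 * n + 1 : ℝ) ^ 2)⁻¹) := by
    rw [lintegral_mul_exp_neg_mul_Ioi (by positivity), ENNReal.ofReal_mul zero_le_two,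
      ENNReal.ofReal_ofNat]
  simp_rw [lintegral_const_mul' _ _ ENNReal.ofNat_ne_top, hterm,
    ← ENNReal.ofReal_tsum_of_nonneg (fun n => by positivity)
      (hasSum_inv_odd_sq.mul_left 2).summable,
    (hasSum_inv_odd_sq.mul_left 2).tsum_eq]
  congr 1
  ring

lemma integrableOn_exp_neg_mul_cosh {x : ℝ} (hx : 0 < x) :
    IntegrableOn (fun t => exp (-x * cosh t)) (Ioi 0) := by
  refine (exp_neg_integrableOn_Ioi 0 hx).mono' (by fun_prop) ?_
  filter_upwards [ae_restrict_mem measurableSet_Ioi] with t ht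
  have : t ≤ cosh t := (self_le_sinh_iff.mpr (le_of_lt ht)).trans (sinh_lt_cosh t).le
  rw [norm_of_nonneg (exp_pos _).le, exp_le_exp]
  nlinarith

lemma ofReal_besselK_zero {x : ℝ} (hx : 0 < x) :
    ENNReal.ofReal (besselK 0 x) = ∫⁻ t in Ioi 0, ENNReal.ofReal (exp (-x * cosh t)) := by
  simp only [besselK, zero_mul, cosh_zero, mul_one]
  exact ofReal_integral_eq_lintegral_ofReal (integrableOn_exp_neg_mul_cosh hx)
    (.of_forall fun t => (exp_pos _).le)

lemma besselK_nonneg (ν x : ℝ) : 0 ≤ besselK ν x :=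
  setIntegral_nonneg measurableSet_Ioi fun _ _ => mul_nonneg (exp_pos _).le (cosh_pos _).le

lemma stronglyMeasurable_besselK (ν : ℝ) : StronglyMeasurable (besselK ν) :=
  (Continuous.stronglyMeasurable (by fun_prop :
    Continuous fun p : ℝ × ℝ => exp (-p.1 * cosh p.2) * cosh (ν * p.2))).integral_prod_right'

lemma ofReal_besselK_zero_sq {x : ℝ} (hx : 0 < x) :
    ENNReal.ofReal (besselK 0 x ^ 2)
      = ∫⁻ s in Ioi 0, ∫⁻ t in Ioi 0, ENNReal.ofReal (exp (-(cosh s + cosh t) * x)) := by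
  have hmeas : Measurable fun t => ENNReal.ofReal (exp (-x * cosh t)) := by fun_prop
  rw [sq, ENNReal.ofReal_mul (besselK_nonneg 0 x), ofReal_besselK_zero hx,
    ← lintegral_mul_const _ hmeas]
  refine lintegral_congr fun s => ?_
  rw [← lintegral_const_mul _ hmeas]
  refine lintegral_congr fun t => ?_
  rw [← ENNReal.ofReal_mul (exp_pos _).le, ← exp_add]
  congr 2
  ring

lemma lintegral_besselK_zero_sq :
    ∫⁻ x in Ioi 0, ENNReal.ofReal (besselK 0 x ^ 2)
      = ∫⁻ s in Ioi 0, ∫⁻ t in Ioi 0, ENNReal.ofReal (cosh s + cosh t)⁻¹ :=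
  calc ∫⁻ x in Ioi 0, ENNReal.ofReal (besselK 0 x ^ 2)
      = ∫⁻ x in Ioi 0, ∫⁻ s in Ioi 0, ∫⁻ t in Ioi 0,
          ENNReal.ofReal (exp (-(cosh s + cosh t) * x)) :=
        setLIntegral_congr_fun measurableSet_Ioi fun _ hx => ofReal_besselK_zero_sq hx
    _ = ∫⁻ s in Ioi 0, ∫⁻ t in Ioi 0, ∫⁻ x in Ioi 0,
          ENNReal.ofReal (exp (-(cosh s + cosh t) * x)) := by
        rw [lintegral_lintegral_swap (by fun_prop)]
        exact lintegral_congr fun s => lintegral_lintegral_swap (by fun_prop)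
    _ = ∫⁻ s in Ioi 0, ∫⁻ t in Ioi 0, ENNReal.ofReal (cosh s + cosh t)⁻¹ :=
        lintegral_congr fun s => lintegral_congr fun t =>
          lintegral_exp_neg_mul_Ioi (by positivity)

theorem integral_besselK0_square :
    ∫ x in Set.Ioi (0 : ℝ), besselK 0 x ^ 2 = Real.pi ^ 2 / 4 := by
  have hmeas : AEStronglyMeasurable (fun x => besselK 0 x ^ 2) (volume.restrict (Ioi 0)) :=
    ((stronglyMeasurable_besselK 0).pow 2).aestronglyMeasurable
  have hlint : ∫⁻ x in Ioi 0, ENNReal.ofReal (besselK 0 x ^ 2) = ENNReal.ofReal (π ^ 2 / 4) := by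
    rw [lintegral_besselK_zero_sq, ← lintegral_div_sinh]
    exact setLIntegral_congr_fun measurableSet_Ioi fun _ hs => lintegral_inv_cosh_add_cosh hs
  rw [integral_eq_lintegral_of_nonneg_ae (.of_forall fun x => sq_nonneg _) hmeas, hlint,
    ENNReal.toReal_ofReal (by positivity)]
end

section
/- For real b with 0 < b < 1, ∫_0^∞ e^{-x} K_0(bx) dx = (log(1+√(1-b²)) − log(1−√(1-b²))) / (2√(1-b²)). -/
open MeasureTheory Set Real Filter Topology

lemma integral_exp_neg_mul_Ioi_zero {c : ℝ} (hc : 0 < c) :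
    ∫ x in Ioi (0 : ℝ), exp (-(c * x)) = c⁻¹ := by
  simpa [neg_mul] using integral_exp_mul_Ioi (neg_lt_zero.2 hc) 0

lemma integrableOn_Ioi_inv_add_mul_cosh {a b : ℝ} (ha : 0 ≤ a) (hb : 0 < b) :
    IntegrableOn (fun t => (a + b * cosh t)⁻¹) (Ioi 0) := by
  refine ((exp_neg_integrableOn_Ioi 0 one_pos).const_mul (2 / b)).mono'
    (by fun_prop (disch := intro t; positivity)) (ae_of_all _ fun t => ?_)
  have hexp : exp t / 2 ≤ cosh t := by rw [cosh_eq]; linarith [exp_pos (-t)]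
  calc ‖(a + b * cosh t)⁻¹‖ = (a + b * cosh t)⁻¹ := by rw [norm_inv, norm_of_nonneg (by positivity)]
    _ ≤ (b * (exp t / 2))⁻¹ := by gcongr; nlinarith
    _ = 2 / b * exp (-1 * t) := by rw [neg_one_mul, exp_neg]; field_simp

theorem integral_exp_neg_mul_mul_besselK_zero {a b : ℝ} (ha : 0 ≤ a) (hb : 0 < b) :
    ∫ x in Ioi (0 : ℝ), exp (-(a * x)) * besselK 0 (b * x)
      = ∫ t in Ioi (0 : ℝ), (a + b * cosh t)⁻¹ := by
  set g : ℝ → ℝ → ℝ := fun x t => exp (-((a + b * cosh t) * x))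
  have hK : ∀ x, exp (-(a * x)) * besselK 0 (b * x) = ∫ t in Ioi (0 : ℝ), g x t := fun x => by
    simp only [besselK, zero_mul, cosh_zero, mul_one, ← integral_const_mul, ← exp_add, g]
    ring_nf
  have hL : ∀ t, ∫ x in Ioi (0 : ℝ), g x t = (a + b * cosh t)⁻¹ := fun t =>
    integral_exp_neg_mul_Ioi_zero (by positivity)
  have hg : Integrable (Function.uncurry g)
      ((volume.restrict (Ioi 0)).prod (volume.restrict (Ioi 0))) := by
    rw [integrable_prod_iff' (by fun_prop)]
    refine ⟨ae_of_all _ fun t => ?_, ?_⟩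
    · exact (exp_neg_integrableOn_Ioi 0 (by positivity : 0 < a + b * cosh t)).congr_fun
        (fun x _ => by simp only [Function.uncurry_apply_pair, g, neg_mul]) measurableSet_Ioi
    · have hnorm : ∀ x t, ‖g x t‖ = g x t := fun _ _ => norm_of_nonneg (exp_pos _).le
      simp only [Function.uncurry_apply_pair, hnorm, hL]
      exact integrableOn_Ioi_inv_add_mul_cosh ha hb
  simp_rw [hK, integral_integral_swap hg, hL]

lemma hasDerivAt_log_add_exp_neg {c t : ℝ} (hc : 0 < c) :
    HasDerivAt (fun t => log (c + exp (-t))) (-exp (-t) / (c + exp (-t))) t := by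
  simpa using ((hasDerivAt_neg t).exp.const_add c).log (by positivity)

/-- With `u = exp (-t)`, `(cosh t + cosh α)⁻¹ = 2u / ((u + exp α) * (u + exp (-α)))`; this primitive
is its partial fraction decomposition. -/
lemma hasDerivAt_primitive_inv_cosh_add_cosh {α : ℝ} (hα : α ≠ 0) (t : ℝ) :
    HasDerivAt (fun t => (log (exp α + exp (-t)) - log (exp (-α) + exp (-t))) / sinh α)
      (cosh t + cosh α)⁻¹ t := by
  refine (((hasDerivAt_log_add_exp_neg (exp_pos α)).sub
    (hasDerivAt_log_add_exp_neg (exp_pos (-α)))).div_const (sinh α)).congr_deriv ?_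
  have hs : exp α ^ 2 - 1 ≠ 0 := by
    rw [sub_ne_zero, ← exp_nat_mul, Ne, exp_eq_one_iff]; simpa using hα
  rw [cosh_eq, cosh_eq, sinh_eq, exp_neg t, exp_neg α]
  field_simp
  ring

theorem integral_Ioi_inv_cosh_add_cosh {α : ℝ} (hα : α ≠ 0) :
    ∫ t in Ioi (0 : ℝ), (cosh t + cosh α)⁻¹ = α / sinh α := by
  set H : ℝ → ℝ := fun u => (log (exp α + u) - log (exp (-α) + u)) / sinh α
  have hlim : Tendsto (fun t => H (exp (-t))) atTop (𝓝 (H 0)) := by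
    refine ((ContinuousAt.tendsto ?_).comp tendsto_exp_neg_atTop_nhds_zero)
    fun_prop (disch := positivity)
  rw [integral_Ioi_of_hasDerivAt_of_nonneg' (fun t _ => hasDerivAt_primitive_inv_cosh_add_cosh hα t)
    (fun t _ => by positivity) hlim]
  have hH1 : log (exp α + 1) = α + log (exp (-α) + 1) := by
    rw [← log_exp α, ← log_mul (exp_pos α).ne' (by positivity), log_exp, mul_add, ← exp_add,
      add_neg_cancel, exp_zero, mul_one, add_comm]
  simp only [H, neg_zero, exp_zero, add_zero, log_exp, hH1]
  ring

theorem integral_exp_besselK0_scaled (b : ℝ) (hb : 0 < b) (hb' : b < 1) :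
    ∫ x in Set.Ioi (0 : ℝ), Real.exp (-x) * besselK 0 (b * x)
      = (Real.log (1 + Real.sqrt (1 - b ^ 2)) - Real.log (1 - Real.sqrt (1 - b ^ 2)))
          / (2 * Real.sqrt (1 - b ^ 2)) := by
  set s := √(1 - b ^ 2)
  have hs : s ∈ Ioo 0 1 := ⟨sqrt_pos.2 (by nlinarith), (sqrt_lt' one_pos).2 (by nlinarith)⟩
  have hs' : s ∈ Ioo (-1) 1 := ⟨by linarith [hs.1], hs.2⟩
  have hb2 : √(1 - s ^ 2) = b := by
    rw [sq_sqrt (by nlinarith), sub_sub_cancel, sqrt_sq hb.le]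
  have hcosh : cosh (artanh s) = b⁻¹ := by rw [cosh_artanh hs', hb2, one_div]
  have hsinh : sinh (artanh s) = s / b := by rw [sinh_artanh hs', hb2]
  calc ∫ x in Ioi (0 : ℝ), exp (-x) * besselK 0 (b * x)
      = ∫ t in Ioi (0 : ℝ), (1 + b * cosh t)⁻¹ := by
        simpa using integral_exp_neg_mul_mul_besselK_zero zero_le_one hb
    _ = ∫ t in Ioi (0 : ℝ), b⁻¹ * (cosh t + cosh (artanh s))⁻¹ := by
        congr 1 with t
        rw [hcosh]
        field_simp
        ring
    _ = artanh s / s := by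
        rw [integral_const_mul, integral_Ioi_inv_cosh_add_cosh (artanh_pos hs).ne', hsinh]
        field_simp
    _ = (log (1 + s) - log (1 - s)) / (2 * s) := by
        rw [artanh_eq_half_log (Ioo_subset_Icc_self hs'), log_div (by linarith [hs.1])
          (by linarith [hs.2])]
        ring
end
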